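/- arXiv:2509.12899 — 3 statements merged into one kernel-verified Lean document; each statement's English description precedes it below -/
import Mathlib

section
/- If n = 3f+1 and each honest participant sends at most one Commit message per (view, sequence number) pair, then it is impossible for two different values δ ≠ δ' to each receive 2f+1 matching Commit messages for the same view and sequence number. -/
/-- With n = 3f+1 participants, at most f Byzantine, and honest participants
sending at most one Commit per (view, sequence), two different values cannot
both gather 2f+1 matching Commit messages. -/
theorem stmt_4 {α V : Type*} [Fintype α] [DecidableEq α] (f : ℕ)
    (hn : Fintype.card α = 3 * f + 1)
    (byz : Finset α) (hb : byz.card ≤ f)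
    (sent : α → V → Prop)
    (honest_once : ∀ a, a ∉ byz → ∀ δ δ', sent a δ → sent a δ' → δ = δ')
    (δ δ' : V) (hne : δ ≠ δ')
    (S S' : Finset α) (hS : 2 * f + 1 ≤ S.card) (hS' : 2 * f + 1 ≤ S'.card)
    (hsent : ∀ a ∈ S, sent a δ) (hsent' : ∀ a ∈ S', sent a δ') :
    False := by
  have hunion : (S ∪ S').card ≤ 3 * f + 1 := hn ▸ Finset.card_le_univ _
  have hkey := Finset.card_union_add_card_inter S S'
  have hinter : f + 1 ≤ (S ∩ S').card := by omega
  have hlt : byz.card < (S ∩ S').card := by omega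
  have hns : ¬ (S ∩ S') ⊆ byz := fun h => absurd (Finset.card_le_card h) (by omega)
  obtain ⟨a, haI, hab⟩ := Finset.not_subset.mp hns
  exact hne (honest_once a hab δ δ' (hsent a (Finset.mem_of_mem_inter_left haI))
    (hsent' a (Finset.mem_of_mem_inter_right haI)))
end

section
/- Under the hypotheses of the previous statement, if additionally ‖Δ_S‖₁ > ‖v − Δ‖₂√k, then cos(v, u) ≥ (‖Δ_S‖₁ − ‖v−Δ‖₂√k)/(‖v‖₂√k) > 0. -/
open Finset in
/-- Cosine lower bound: under the hypotheses of the inner-product bound, if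
‖Δ_S‖₁ > ‖v−Δ‖₂√k then cos(v,u) ≥ (‖Δ_S‖₁ − ‖v−Δ‖₂√k)/(‖v‖₂√k) > 0. -/
theorem stmt_11 (d k : ℕ) (hk : 1 ≤ k) (Δ v u : Fin d → ℝ) (hv : v ≠ 0)
    (S : Finset (Fin d)) (hS : S.card = k)
    (hsupp : ∀ i, u i ≠ 0 ↔ i ∈ S)
    (hsign : ∀ i ∈ S, u i = Real.sign (Δ i))
    (hgap : Real.sqrt (∑ i, (v i - Δ i) ^ 2) * Real.sqrt k < ∑ i ∈ S, |Δ i|) :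
    ((∑ i ∈ S, |Δ i|) - Real.sqrt (∑ i, (v i - Δ i) ^ 2) * Real.sqrt k) /
        (Real.sqrt (∑ i, (v i) ^ 2) * Real.sqrt k) ≤
      (∑ i, v i * u i) /
        (Real.sqrt (∑ i, (v i) ^ 2) * Real.sqrt (∑ i, (u i) ^ 2)) ∧
    0 < ((∑ i ∈ S, |Δ i|) - Real.sqrt (∑ i, (v i - Δ i) ^ 2) * Real.sqrt k) /
        (Real.sqrt (∑ i, (v i) ^ 2) * Real.sqrt k) := by
  have hΔne : ∀ i ∈ S, Δ i ≠ 0 := by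
    intro i hi h0
    have h := (hsupp i).2 hi
    rw [hsign i hi, h0, Real.sign_zero] at h
    exact h rfl
  have hu0 : ∀ i ∉ S, u i = 0 := by
    intro i hi
    by_contra h
    exact hi ((hsupp i).1 h)
  have hu1 : ∀ i ∈ S, u i = 1 ∨ u i = -1 := by
    intro i hi
    rw [hsign i hi]
    rcases lt_trichotomy (Δ i) 0 with h | h | h
    · right; exact Real.sign_of_neg h
    · exact absurd h (hΔne i hi)
    · left; exact Real.sign_of_pos h
  have hu2 : ∑ i, (u i) ^ 2 = (k : ℝ) := by
    rw [← Finset.sum_subset (Finset.subset_univ S)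
      (fun i _ hi => by rw [hu0 i hi]; ring)]
    rw [Finset.sum_congr rfl (fun i hi => show (u i) ^ 2 = 1 by
      rcases hu1 i hi with h | h <;> rw [h] <;> norm_num)]
    simp [hS]
  have hΔu : ∀ i ∈ S, Δ i * u i = |Δ i| := by
    intro i hi
    rw [hsign i hi]
    rcases lt_trichotomy (Δ i) 0 with h | h | h
    · rw [Real.sign_of_neg h, abs_of_neg h]; ring
    · exact absurd h (hΔne i hi)
    · rw [Real.sign_of_pos h, abs_of_pos h]; ring
  have hvu : ∑ i, v i * u i = (∑ i, (v i - Δ i) * u i) + ∑ i ∈ S, |Δ i| := by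
    have h1 : ∑ i ∈ S, |Δ i| = ∑ i, Δ i * u i := by
      rw [← Finset.sum_subset (Finset.subset_univ S)
        (fun i _ hi => by rw [hu0 i hi]; ring)]
      exact Finset.sum_congr rfl (fun i hi => (hΔu i hi).symm)
    rw [h1, ← Finset.sum_add_distrib]
    exact Finset.sum_congr rfl (fun i _ => by ring)
  have hcs : -(Real.sqrt (∑ i, (v i - Δ i) ^ 2) * Real.sqrt k)
      ≤ ∑ i, (v i - Δ i) * u i := by
    have h2 := Real.sum_mul_le_sqrt_mul_sqrt Finset.univ
      (fun i => -(v i - Δ i)) u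
    simp only [neg_mul, Finset.sum_neg_distrib, neg_sq] at h2
    rw [hu2] at h2
    linarith
  have hnum : (∑ i ∈ S, |Δ i|) - Real.sqrt (∑ i, (v i - Δ i) ^ 2) * Real.sqrt k
      ≤ ∑ i, v i * u i := by rw [hvu]; linarith
  have hv2 : 0 < ∑ i, (v i) ^ 2 := by
    obtain ⟨j, hj⟩ := Function.ne_iff.1 hv
    have hj' : v j ≠ 0 := by simpa using hj
    exact Finset.sum_pos' (fun i _ => sq_nonneg _)
      ⟨j, Finset.mem_univ j, by positivity⟩
  have hk0 : (0 : ℝ) < k := by exact_mod_cast hk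
  have hden : 0 < Real.sqrt (∑ i, (v i) ^ 2) * Real.sqrt k :=
    mul_pos (Real.sqrt_pos.2 hv2) (Real.sqrt_pos.2 hk0)
  constructor
  · rw [hu2]
    exact div_le_div_of_nonneg_right hnum hden.le |>.trans_eq rfl
  · exact div_pos (by linarith) hden
end

section
/- In Shamir (th, n) secret sharing over ℤ_q with q prime and evaluation points 1,…,n (all nonzero mod q), for any set T of at most th−1 share indices and any two secrets s, s' ∈ ℤ_q, the number of polynomials of degree < th with constant term s matching any given values on T equals the number with constant term s'; hence the shares in T reveal no information about the secret. -/
open Finset Polynomial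

lemma shamir_fiber_count (q th : ℕ) [Fact (Nat.Prime q)] (hth : 0 < th)
    (S : Finset (ZMod q)) (hS : S.card ≤ th) (w : ZMod q → ZMod q) :
    (Finset.univ.filter (fun a : Fin th → ZMod q =>
        ∀ x ∈ S, ∑ k : Fin th, a k * x ^ (k : ℕ) = w x)).card = q ^ (th - S.card) := by
  classical
  let Φ : (Fin th → ZMod q) →+ (S → ZMod q) :=
  { toFun := fun a x => ∑ k : Fin th, a k * (x : ZMod q) ^ (k : ℕ)
    map_zero' := by funext x; simp
    map_add' := by
      intro a b; funext x
      simp [add_mul, Finset.sum_add_distrib] }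
  have hsurj : Function.Surjective Φ := by
    intro r
    set f : ZMod q → ZMod q := fun y => if h : y ∈ S then r ⟨y, h⟩ else 0 with hf
    set p := Lagrange.interpolate S id f with hp
    have hdeg : p.natDegree < th := by
      have h1 : p.degree < (S.card : WithBot ℕ) :=
        Lagrange.degree_interpolate_lt _ (Set.injOn_id _)
      rcases eq_or_ne p 0 with h | h
      · simpa [h] using hth
      · rw [← Polynomial.natDegree_lt_iff_degree_lt h] at h1
        omega
    refine ⟨fun k => p.coeff k, ?_⟩
    funext x
    have hev : p.eval ((x : ZMod q)) = f x :=
      Lagrange.eval_interpolate_at_node f (Set.injOn_id _) x.2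
    have : (Φ fun k : Fin th => p.coeff k) x = p.eval (x : ZMod q) := by
      rw [Polynomial.eval_eq_sum_range' hdeg]
      simp only [Φ, AddMonoidHom.coe_mk, ZeroHom.coe_mk]
      rw [Fin.sum_univ_eq_sum_range (fun i => p.coeff i * (x : ZMod q) ^ i)]
    rw [this, hev, hf]
    simp [x.2]
  have hcardq : 0 < q := (Fact.out : Nat.Prime q).pos
  have hker : Nat.card (AddMonoidHom.ker Φ) = q ^ (th - S.card) := by
    have h1 := AddSubgroup.card_eq_card_quotient_mul_card_addSubgroup (AddMonoidHom.ker Φ)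
    have h2 : Nat.card ((Fin th → ZMod q) ⧸ AddMonoidHom.ker Φ) = q ^ S.card := by
      rw [Nat.card_congr (QuotientAddGroup.quotientKerEquivRange Φ).toEquiv]
      rw [(AddMonoidHom.range_eq_top).2 hsurj]
      rw [Nat.card_congr AddSubgroup.topEquiv.toEquiv]
      simp [Nat.card_eq_fintype_card]
    have h3 : Nat.card (Fin th → ZMod q) = q ^ th := by
      simp [Nat.card_eq_fintype_card]
    rw [h3, h2] at h1
    have h4 : q ^ th = q ^ S.card * q ^ (th - S.card) := by
      rw [← pow_add, Nat.add_sub_cancel' hS]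
    rw [h4] at h1
    exact (Nat.eq_of_mul_eq_mul_left (pow_pos hcardq _) h1.symm)
  obtain ⟨a₀, ha₀⟩ := hsurj (fun x : S => w x)
  have hequiv : {a : Fin th → ZMod q // Φ a = fun x : S => w x} ≃ AddMonoidHom.ker Φ :=
  { toFun := fun a => ⟨a.1 - a₀, by
      rw [AddMonoidHom.mem_ker, map_sub, a.2, ha₀, sub_self]⟩
    invFun := fun b => ⟨b.1 + a₀, by
      have hb : Φ b.1 = 0 := AddMonoidHom.mem_ker.1 b.2
      rw [map_add, hb, ha₀, zero_add]⟩
    left_inv := fun a => by simp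
    right_inv := fun b => by simp }
  have hpred : ∀ a : Fin th → ZMod q,
      (∀ x ∈ S, ∑ k : Fin th, a k * x ^ (k : ℕ) = w x) ↔ (Φ a = fun x : S => w x) := by
    intro a
    rw [funext_iff]
    constructor
    · intro h x; exact h x x.2
    · intro h x hx; exact h ⟨x, hx⟩
  calc (Finset.univ.filter (fun a : Fin th → ZMod q =>
        ∀ x ∈ S, ∑ k : Fin th, a k * x ^ (k : ℕ) = w x)).card
      = (Finset.univ.filter (fun a : Fin th → ZMod q => Φ a = fun x : S => w x)).card := by
        congr 1
        apply Finset.filter_congr; intro a _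
        simp only [hpred a]
    _ = Fintype.card {a : Fin th → ZMod q // Φ a = fun x : S => w x} :=
        (Fintype.card_subtype _).symm
    _ = Nat.card {a : Fin th → ZMod q // Φ a = fun x : S => w x} :=
        (Nat.card_eq_fintype_card).symm
    _ = Nat.card (AddMonoidHom.ker Φ) := Nat.card_congr hequiv
    _ = q ^ (th - S.card) := hker

open Finset in
/-- Perfect secrecy of Shamir sharing: for |T| ≤ th−1 share indices from
{1,…,n} (all nonzero mod q), the number of degree-(< th) polynomials with
constant term s consistent with given share values on T is independent of s,
namely q^(th−1−|T|). -/
theorem stmt_15 (q th n : ℕ) [Fact (Nat.Prime q)] (hth : 1 ≤ th)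
    (hnq : n < q) (T : Finset ℕ) (hT : ∀ j ∈ T, 1 ≤ j ∧ j ≤ n)
    (hTcard : T.card ≤ th - 1) (vals : ℕ → ZMod q) (s s' : ZMod q) :
    (Finset.univ.filter (fun a : Fin th → ZMod q =>
        a ⟨0, hth⟩ = s ∧
        ∀ j ∈ T, ∑ k : Fin th, a k * (j : ZMod q) ^ (k : ℕ) = vals j)).card =
      (Finset.univ.filter (fun a : Fin th → ZMod q =>
        a ⟨0, hth⟩ = s' ∧
        ∀ j ∈ T, ∑ k : Fin th, a k * (j : ZMod q) ^ (k : ℕ) = vals j)).card ∧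
    (Finset.univ.filter (fun a : Fin th → ZMod q =>
        a ⟨0, hth⟩ = s ∧
        ∀ j ∈ T, ∑ k : Fin th, a k * (j : ZMod q) ^ (k : ℕ) = vals j)).card =
      q ^ (th - 1 - T.card) := by
  classical
  -- facts about casting T into ZMod q
  have hlt : ∀ j ∈ T, j < q := fun j hj => lt_of_le_of_lt (hT j hj).2 hnq
  have hval : ∀ j ∈ T, ((j : ZMod q)).val = j := fun j hj =>
    ZMod.val_natCast_of_lt (hlt j hj)
  have hne0 : ∀ j ∈ T, (j : ZMod q) ≠ 0 := by
    intro j hj h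
    have h1 := hval j hj
    have h2 := (hT j hj).1
    rw [h, ZMod.val_zero] at h1
    omega
  -- the finset of evaluation points in ZMod q, together with 0
  set Tq : Finset (ZMod q) := T.image (fun j : ℕ => (j : ZMod q)) with hTq
  have h0T : (0 : ZMod q) ∉ Tq := by
    simp only [hTq, mem_image, not_exists]
    rintro j ⟨hj, h⟩
    exact hne0 j hj h
  have hTqcard : Tq.card = T.card := by
    apply Finset.card_image_of_injOn
    intro j₁ h₁ j₂ h₂ h
    have := congrArg ZMod.val h
    rwa [hval j₁ h₁, hval j₂ h₂] at this
  set S : Finset (ZMod q) := insert (0 : ZMod q) Tq with hSdef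
  have hScard : S.card = T.card + 1 := by
    rw [hSdef, Finset.card_insert_of_notMem h0T, hTqcard]
  have hSle : S.card ≤ th := by omega
  -- evaluation at zero gives the constant term
  have heval0 : ∀ a : Fin th → ZMod q,
      ∑ k : Fin th, a k * (0 : ZMod q) ^ (k : ℕ) = a ⟨0, hth⟩ := by
    intro a
    rw [Finset.sum_eq_single (⟨0, hth⟩ : Fin th)]
    · simp
    · intro k _ hk
      have : (k : ℕ) ≠ 0 := by
        intro h; apply hk; ext; simpa using h
      simp [zero_pow this]
    · simp
  -- the two predicates coincide
  have hpred : ∀ (t : ZMod q) (a : Fin th → ZMod q),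
      (a ⟨0, hth⟩ = t ∧ ∀ j ∈ T, ∑ k : Fin th, a k * (j : ZMod q) ^ (k : ℕ) = vals j) ↔
      (∀ x ∈ S, ∑ k : Fin th, a k * x ^ (k : ℕ)
        = (fun x : ZMod q => if x = 0 then t else vals x.val) x) := by
    intro t a
    constructor
    · rintro ⟨h0, hTv⟩ x hx
      rcases Finset.mem_insert.1 hx with rfl | hx
      · simp [heval0 a, h0]
      · obtain ⟨j, hj, rfl⟩ := Finset.mem_image.1 hx
        simp only [if_neg (hne0 j hj), hval j hj]
        exact hTv j hj
    · intro h
      constructor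
      · have := h 0 (Finset.mem_insert_self _ _)
        simpa [heval0 a] using this
      · intro j hj
        have := h (j : ZMod q) (Finset.mem_insert.2 (Or.inr (Finset.mem_image_of_mem _ hj)))
        simpa [if_neg (hne0 j hj), hval j hj] using this
  clear_value S Tq
  have hcount : ∀ t : ZMod q,
      (Finset.univ.filter (fun a : Fin th → ZMod q =>
        a ⟨0, hth⟩ = t ∧
        ∀ j ∈ T, ∑ k : Fin th, a k * (j : ZMod q) ^ (k : ℕ) = vals j)).card =
      q ^ (th - 1 - T.card) := by
    intro t
    have harith : th - 1 - T.card = th - S.card := by omega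
    have hfc := shamir_fiber_count q th hth S hSle
      (fun x : ZMod q => if x = 0 then t else vals x.val)
    rw [harith, ← hfc]
    congr 1
    apply Finset.filter_congr
    intro a _
    simp only [hpred t a]
  exact ⟨(hcount s).trans (hcount s').symm, hcount s⟩
end
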